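/- arXiv:1301.6628 — 2 statements merged into one kernel-verified Lean document; each statement's English description precedes it below -/
import Mathlib

section
/- Let f ∈ ℝ^E be a feasible flow and e ∈ E∖T an off-tree edge. Then ξ_r(f − (Δ_e(f)/R_e)c_e) − ξ_r(f) = −Δ_e(f)²/R_e, where Δ_e(f) = fᵀRc_e and R_e = c_eᵀRc_e. -/
/-!
Since `R` is symmetric, the energy along the line `f - t c` is the quadratic
`ξ(f) - 2 t Δ + t² R_e`. Its minimiser is `t = Δ / R_e`, where the energy has dropped by
`Δ² / R_e`; this is well defined because `R` is positive definite and `c_e ≠ 0`.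
-/

open Matrix

namespace Matrix

variable {n R : Type*} [Fintype n]

theorem IsSymm.dotProduct_mulVec_comm [CommSemiring R] {A : Matrix n n R} (hA : A.IsSymm)
    (u v : n → R) : u ⬝ᵥ A *ᵥ v = v ⬝ᵥ A *ᵥ u := by
  rw [dotProduct_mulVec, ← mulVec_transpose, hA.eq, dotProduct_comm]

theorem IsSymm.dotProduct_mulVec_sub_smul [CommRing R] {A : Matrix n n R} (hA : A.IsSymm)
    (f c : n → R) (t : R) :
    (f - t • c) ⬝ᵥ A *ᵥ (f - t • c) =
      f ⬝ᵥ A *ᵥ f - 2 * t * (f ⬝ᵥ A *ᵥ c) + t ^ 2 * (c ⬝ᵥ A *ᵥ c) := by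
  rw [mulVec_sub, mulVec_smul, sub_dotProduct, dotProduct_sub, dotProduct_sub, smul_dotProduct,
    smul_dotProduct, dotProduct_smul, dotProduct_smul, hA.dotProduct_mulVec_comm c f,
    smul_eq_mul, smul_eq_mul, smul_eq_mul]
  ring

end Matrix

theorem cycle_update_energy_decrease_general {E : Type} [Fintype E] [DecidableEq E]
    (r : E → ℝ) (hr : ∀ e, 0 < r e) (e : E) (c : E → ℝ) (hc1 : c e = 1) (f : E → ℝ) (Δ Re : ℝ)
    (hΔ : Δ = f ⬝ᵥ (Matrix.diagonal r).mulVec c)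
    (hRe : Re = c ⬝ᵥ (Matrix.diagonal r).mulVec c) :
    (f - (Δ / Re) • c) ⬝ᵥ (Matrix.diagonal r).mulVec (f - (Δ / Re) • c) -
        f ⬝ᵥ (Matrix.diagonal r).mulVec f = -(Δ ^ 2 / Re) := by
  have hc : c ≠ 0 := fun h => by simp [h] at hc1
  have hRe_pos : 0 < Re := by
    simpa [hRe] using (PosDef.diagonal hr).dotProduct_mulVec_pos hc
  rw [(isSymm_diagonal r).dotProduct_mulVec_sub_smul, ← hΔ, ← hRe]
  field_simp
  ring

/-- Energy decrease of a single cycle update: for a feasible flow `f` and the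
tree cycle vector `c` of an off-tree edge `e`, updating
`f ↦ f - (Δ_e(f)/R_e) c` decreases the energy by exactly `Δ_e(f)²/R_e`,
where `Δ_e(f) = fᵀ R c` and `R_e = cᵀ R c`. -/
theorem cycle_update_energy_decrease {V E : Type} [Fintype V] [Fintype E]
    [DecidableEq V] [DecidableEq E]
    (head tail : E → V) (hht : ∀ e, head e ≠ tail e)
    (hconn : (SimpleGraph.fromRel fun a b => ∃ e, head e = a ∧ tail e = b).Connected)
    (r : E → ℝ) (hr : ∀ e, 0 < r e)
    (B : Matrix E V ℝ)
    (hB : ∀ e v, B e v = if v = head e then (1 : ℝ) else if v = tail e then -1 else 0)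
    (T : Finset E)
    (hT : (SimpleGraph.fromRel fun a b => ∃ e ∈ T, head e = a ∧ tail e = b).IsTree)
    (e : E) (he : e ∉ T)
    (c : E → ℝ)
    (hc1 : c e = 1)
    (hc2 : ∀ e' ∉ T, e' ≠ e → c e' = 0)
    (hc3 : B.transpose.mulVec c = 0)
    (χ : V → ℝ) (f : E → ℝ) (hf : B.transpose.mulVec f = χ)
    (Δ Re : ℝ)
    (hΔ : Δ = f ⬝ᵥ (Matrix.diagonal r).mulVec c)
    (hRe : Re = c ⬝ᵥ (Matrix.diagonal r).mulVec c) :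
    (f - (Δ / Re) • c) ⬝ᵥ (Matrix.diagonal r).mulVec (f - (Δ / Re) • c) -
        f ⬝ᵥ (Matrix.diagonal r).mulVec f = -(Δ ^ 2 / Re) :=
  cycle_update_energy_decrease_general r hr e c hc1 f Δ Re hΔ hRe
end

section
/- (Gremban-style reduction preserves approximate solutions) Let A = D₁ + A_p + A_n + D₂ be an SDD matrix, where A_p (resp. A_n) collects the positive (resp. negative) off-diagonal entries, D₁(i,i) = Σ_j |A(i,j)|, and D₂ = A − A_p − A_n − D₁ has nonnegative diagonal. Define the 2n×2n Laplacian Ã = [[D₁+D₂/2+A_n, −D₂/2−A_p],[−D₂/2−A_p, D₁+D₂/2+A_n]]. If (x̂₁, x̂₂) satisfies ‖(x̂₁,x̂₂) − (x₁,x₂)‖_Ã ≤ ε‖(x₁,x₂)‖_Ã for some exact solution Ã(x₁,x₂) = (b,−b), then x̂ = (x̂₁ − x̂₂)/2 satisfies ‖x̂ − x‖_A ≤ ε‖x‖_A, where x = (x₁ − x₂)/2 solves Ax = b. -/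
/-!
Write `Ã = [[M, B], [B, M]]` with `M = D₁ + D₂/2 + A_n` and `B = -D₂/2 - A_p`, so that `M - B = A`
and `M + B = D₁ - (A_p - A_n)`. The latter is a weighted Laplacian (weights `|A i j|` off the
diagonal) plus the nonnegative diagonal `|A i i|`, hence positive semidefinite. The parallelogram
identity `2 (p, q)ᵀ Ã (p, q) = (p - q)ᵀ (M - B) (p - q) + (p + q)ᵀ (M + B) (p + q)` then gives
`2 Ã ⪰ [[A, -A], [-A, A]]`, which bounds the `A`-error of `(x̂₁ - x̂₂)/2` by the `Ã`-error of
`(x̂₁, x̂₂)`, while the exact solution satisfies `‖(x₁, x₂)‖²_Ã = 2 ‖x‖²_A`.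
-/

open Matrix

namespace Matrix

variable {m R : Type*}

section CommRing

variable [Fintype m] [CommRing R]

theorem two_mul_sumElim_dotProduct_fromBlocks_mulVec (M B : Matrix m m R) (p q : m → R) :
    2 * (Sum.elim p q ⬝ᵥ fromBlocks M B B M *ᵥ Sum.elim p q) =
      (p - q) ⬝ᵥ (M - B) *ᵥ (p - q) + (p + q) ⬝ᵥ (M + B) *ᵥ (p + q) := by
  simp only [fromBlocks_mulVec, sumElim_dotProduct_sumElim, Sum.elim_comp_inl, Sum.elim_comp_inr,
    sub_mulVec, add_mulVec, mulVec_sub, mulVec_add, dotProduct_add, dotProduct_sub,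
    add_dotProduct, sub_dotProduct]
  ring

theorem sub_mulVec_sub_of_fromBlocks_mulVec_eq {M B : Matrix m m R} {x₁ x₂ b : m → R}
    (h : fromBlocks M B B M *ᵥ Sum.elim x₁ x₂ = Sum.elim b (-b)) :
    (M - B) *ᵥ (x₁ - x₂) = (2 : R) • b := by
  rw [fromBlocks_mulVec] at h
  have h₁ := congrArg (· ∘ Sum.inl) h
  have h₂ := congrArg (· ∘ Sum.inr) h
  simp only [Sum.elim_comp_inl, Sum.elim_comp_inr] at h₁ h₂
  rw [sub_mulVec, mulVec_sub, mulVec_sub, two_smul]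
  calc M *ᵥ x₁ - M *ᵥ x₂ - (B *ᵥ x₁ - B *ᵥ x₂)
      = (M *ᵥ x₁ + B *ᵥ x₂) - (B *ᵥ x₁ + M *ᵥ x₂) := by abel
    _ = b + b := by rw [h₁, h₂, sub_neg_eq_add]

theorem two_mul_dotProduct_diagonal_sum_sub_mulVec [DecidableEq m] {W : Matrix m m R}
    (hW : W.IsSymm) (z : m → R) :
    2 * (z ⬝ᵥ (diagonal (fun i => ∑ j, W i j) - W) *ᵥ z) =
      ∑ i, ∑ j, W i j * (z i - z j) ^ 2 := by
  have hswap : ∑ i, ∑ j, W i j * z j ^ 2 = ∑ i, ∑ j, W i j * z i ^ 2 := by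
    rw [Finset.sum_comm]
    simp_rw [hW.apply]
  have hform : z ⬝ᵥ (diagonal (fun i => ∑ j, W i j) - W) *ᵥ z =
      ∑ i, ∑ j, W i j * z i ^ 2 - ∑ i, ∑ j, W i j * (z i * z j) := by
    rw [sub_mulVec, dotProduct_sub]
    congr 1
    · simp only [dotProduct, mulVec_diagonal, Finset.mul_sum, Finset.sum_mul]
      exact Finset.sum_congr rfl fun i _ => Finset.sum_congr rfl fun j _ => by ring
    · simp only [dotProduct, mulVec, Finset.mul_sum]
      exact Finset.sum_congr rfl fun i _ => Finset.sum_congr rfl fun j _ => by ring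
  have hexpand : ∑ i, ∑ j, W i j * (z i - z j) ^ 2 =
      ∑ i, ∑ j, W i j * z i ^ 2 + ∑ i, ∑ j, W i j * z j ^ 2 -
        2 * ∑ i, ∑ j, W i j * (z i * z j) := by
    simp only [Finset.mul_sum, ← Finset.sum_add_distrib, ← Finset.sum_sub_distrib]
    exact Finset.sum_congr rfl fun i _ => Finset.sum_congr rfl fun j _ => by ring
  rw [hform, hexpand, hswap]
  ring

end CommRing

section Ordered

variable [CommRing R] [LinearOrder R] [IsStrictOrderedRing R]

theorem posPart_sub_negPart_eq_offDiag_abs [DecidableEq m] {A Ap An : Matrix m m R}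
    (hAp : ∀ i j, Ap i j = if i ≠ j ∧ 0 < A i j then A i j else 0)
    (hAn : ∀ i j, An i j = if i ≠ j ∧ A i j < 0 then A i j else 0) :
    Ap - An = of fun i j => if i = j then 0 else |A i j| := by
  ext i j
  rw [sub_apply, hAp, hAn, of_apply]
  by_cases hij : i = j
  · simp [hij]
  · rcases lt_trichotomy (A i j) 0 with h | h | h
    · simp [hij, h, h.not_gt, abs_of_neg h]
    · simp [hij, h]
    · simp [hij, h, h.not_gt, abs_of_pos h]

variable [Fintype m]

theorem dotProduct_diagonal_sub_mulVec_nonneg [DecidableEq m] {W : Matrix m m R}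
    (hW : W.IsSymm) (hW₀ : ∀ i j, 0 ≤ W i j) {d : m → R} (hd : ∀ i, ∑ j, W i j ≤ d i)
    (z : m → R) : 0 ≤ z ⬝ᵥ (diagonal d - W) *ᵥ z := by
  set s : m → R := fun i => ∑ j, W i j
  have hsplit : diagonal d - W = diagonal (d - s) + (diagonal s - W) := by
    rw [show diagonal (d - s) = diagonal d - diagonal s from (diagonal_sub d s).symm]
    abel
  have hexcess : 0 ≤ z ⬝ᵥ diagonal (d - s) *ᵥ z := by
    simp only [mulVec_diagonal, dotProduct, Pi.sub_apply]
    exact Finset.sum_nonneg fun i _ => by nlinarith [hd i, mul_self_nonneg (z i)]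
  have hlaplacian : 0 ≤ 2 * (z ⬝ᵥ (diagonal s - W) *ᵥ z) := by
    rw [two_mul_dotProduct_diagonal_sum_sub_mulVec hW]
    exact Finset.sum_nonneg fun i _ => Finset.sum_nonneg fun j _ =>
      mul_nonneg (hW₀ i j) (sq_nonneg _)
  rw [hsplit, add_mulVec, dotProduct_add]
  linarith

theorem dotProduct_diagonal_sum_abs_sub_offDiag_mulVec_nonneg [DecidableEq m] {A : Matrix m m R}
    (hA : A.IsSymm) (z : m → R) :
    0 ≤ z ⬝ᵥ (diagonal (fun i => ∑ j, |A i j|) - of fun i j => if i = j then 0 else |A i j|) *ᵥ z :=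
  dotProduct_diagonal_sub_mulVec_nonneg
    (IsSymm.ext fun i j => by simp only [of_apply, eq_comm (a := i), hA.apply])
    (fun i j => by simp only [of_apply]; split_ifs <;> positivity)
    (fun i => Finset.sum_le_sum fun j _ => by simp only [of_apply]; split_ifs <;> simp)
    z

theorem sub_dotProduct_sub_mulVec_le_two_mul_sumElim {M B : Matrix m m R}
    (hMB : ∀ z, 0 ≤ z ⬝ᵥ (M + B) *ᵥ z) (p q : m → R) :
    (p - q) ⬝ᵥ (M - B) *ᵥ (p - q) ≤
      2 * (Sum.elim p q ⬝ᵥ fromBlocks M B B M *ᵥ Sum.elim p q) := by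
  rw [two_mul_sumElim_dotProduct_fromBlocks_mulVec]
  linarith [hMB (p + q)]

end Ordered

end Matrix

theorem Real.sqrt_le_mul_sqrt_of_two_mul_le {u v s ε : ℝ} (hu : 2 * u ≤ s)
    (hs : √s ≤ ε * √(2 * v)) : √u ≤ ε * √v := by
  have h2 : (0 : ℝ) < √2 := by positivity
  have : √2 * √u ≤ √2 * (ε * √v) := by
    rw [← Real.sqrt_mul zero_le_two]
    calc √(2 * u) ≤ √s := Real.sqrt_le_sqrt hu
      _ ≤ ε * √(2 * v) := hs
      _ = √2 * (ε * √v) := by rw [Real.sqrt_mul zero_le_two]; ring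
  exact le_of_mul_le_mul_left this h2

theorem gremban_reduction_general {n : ℕ}
    (A : Matrix (Fin n) (Fin n) ℝ) (hsym : A.IsSymm)
    (Ap An D1 D2 : Matrix (Fin n) (Fin n) ℝ)
    (hAp : ∀ i j, Ap i j = if i ≠ j ∧ 0 < A i j then A i j else 0)
    (hAn : ∀ i j, An i j = if i ≠ j ∧ A i j < 0 then A i j else 0)
    (hD1 : D1 = Matrix.diagonal fun i => ∑ j, |A i j|)
    (hD2 : D2 = A - Ap - An - D1)
    (Atil : Matrix (Fin n ⊕ Fin n) (Fin n ⊕ Fin n) ℝ)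
    (hAtil : Atil = Matrix.fromBlocks
      (D1 + (1 / 2 : ℝ) • D2 + An) (-(1 / 2 : ℝ) • D2 - Ap)
      (-(1 / 2 : ℝ) • D2 - Ap) (D1 + (1 / 2 : ℝ) • D2 + An))
    (b x1 x2 xh1 xh2 : Fin n → ℝ) (ε : ℝ)
    (hexact : Atil.mulVec (Sum.elim x1 x2) = Sum.elim b (-b))
    (happrox :
      Real.sqrt ((Sum.elim xh1 xh2 - Sum.elim x1 x2) ⬝ᵥ
          Atil.mulVec (Sum.elim xh1 xh2 - Sum.elim x1 x2)) ≤
        ε * Real.sqrt (Sum.elim x1 x2 ⬝ᵥ Atil.mulVec (Sum.elim x1 x2))) :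
    A.mulVec ((1 / 2 : ℝ) • (x1 - x2)) = b ∧
      Real.sqrt (((1 / 2 : ℝ) • (xh1 - xh2) - (1 / 2 : ℝ) • (x1 - x2)) ⬝ᵥ
          A.mulVec ((1 / 2 : ℝ) • (xh1 - xh2) - (1 / 2 : ℝ) • (x1 - x2))) ≤
        ε * Real.sqrt ((1 / 2 : ℝ) • (x1 - x2) ⬝ᵥ
          A.mulVec ((1 / 2 : ℝ) • (x1 - x2))) := by
  set M := D1 + (1 / 2 : ℝ) • D2 + An with hM
  set B := -(1 / 2 : ℝ) • D2 - Ap with hB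
  have hMB : M - B = A := by rw [hM, hB, hD2]; module
  have hlaplacian : ∀ z, 0 ≤ z ⬝ᵥ (M + B) *ᵥ z := by
    have : M + B = D1 - (Ap - An) := by rw [hM, hB, hD2]; module
    rw [this, hD1, posPart_sub_negPart_eq_offDiag_abs hAp hAn]
    exact dotProduct_diagonal_sum_abs_sub_offDiag_mulVec_nonneg hsym
  subst hAtil
  have hsolve : A *ᵥ ((1 / 2 : ℝ) • (x1 - x2)) = b := by
    rw [mulVec_smul, ← hMB, sub_mulVec_sub_of_fromBlocks_mulVec_eq hexact, smul_smul]
    norm_num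
  have henergy : Sum.elim x1 x2 ⬝ᵥ fromBlocks M B B M *ᵥ Sum.elim x1 x2 =
      2 * ((1 / 2 : ℝ) • (x1 - x2) ⬝ᵥ A *ᵥ ((1 / 2 : ℝ) • (x1 - x2))) := by
    rw [hexact, hsolve, sumElim_dotProduct_sumElim, dotProduct_neg, smul_dotProduct,
      sub_dotProduct, smul_eq_mul]
    ring
  have herror : 2 * (((1 / 2 : ℝ) • (xh1 - xh2) - (1 / 2 : ℝ) • (x1 - x2)) ⬝ᵥ
      A *ᵥ ((1 / 2 : ℝ) • (xh1 - xh2) - (1 / 2 : ℝ) • (x1 - x2))) ≤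
      (Sum.elim xh1 xh2 - Sum.elim x1 x2) ⬝ᵥ
        fromBlocks M B B M *ᵥ (Sum.elim xh1 xh2 - Sum.elim x1 x2) := by
    have herr := sub_dotProduct_sub_mulVec_le_two_mul_sumElim hlaplacian (xh1 - x1) (xh2 - x2)
    rw [hMB, Sum.elim_sub_sub] at herr
    have hhalf : (1 / 2 : ℝ) • (xh1 - xh2) - (1 / 2 : ℝ) • (x1 - x2) =
        (1 / 2 : ℝ) • (xh1 - x1 - (xh2 - x2)) := by module
    rw [hhalf, mulVec_smul, smul_dotProduct, dotProduct_smul, smul_eq_mul, smul_eq_mul]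
    linarith
  exact ⟨hsolve, Real.sqrt_le_mul_sqrt_of_two_mul_le herror (henergy ▸ happrox)⟩

/-- The Gremban-style reduction from SDD systems to Laplacian systems
preserves approximate solutions: if `(x̂₁, x̂₂)` is an `ε`-approximate solution
(in the `Ã`-norm) to the `2n × 2n` Laplacian system `Ã (x₁,x₂) = (b,-b)`,
then `x̂ = (x̂₁ - x̂₂)/2` is an `ε`-approximate solution (in the `A`-norm) to
`A x = b`, where `x = (x₁ - x₂)/2` is an exact solution. -/
theorem gremban_reduction {n : ℕ}
    (A : Matrix (Fin n) (Fin n) ℝ) (hsym : A.IsSymm)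
    (hdd : ∀ i, ∑ j ∈ Finset.univ.erase i, |A i j| ≤ A i i)
    (Ap An D1 D2 : Matrix (Fin n) (Fin n) ℝ)
    (hAp : ∀ i j, Ap i j = if i ≠ j ∧ 0 < A i j then A i j else 0)
    (hAn : ∀ i j, An i j = if i ≠ j ∧ A i j < 0 then A i j else 0)
    (hD1 : D1 = Matrix.diagonal fun i => ∑ j, |A i j|)
    (hD2 : D2 = A - Ap - An - D1)
    (Atil : Matrix (Fin n ⊕ Fin n) (Fin n ⊕ Fin n) ℝ)
    (hAtil : Atil = Matrix.fromBlocks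
      (D1 + (1 / 2 : ℝ) • D2 + An) (-(1 / 2 : ℝ) • D2 - Ap)
      (-(1 / 2 : ℝ) • D2 - Ap) (D1 + (1 / 2 : ℝ) • D2 + An))
    (b x1 x2 xh1 xh2 : Fin n → ℝ) (ε : ℝ)
    (hexact : Atil.mulVec (Sum.elim x1 x2) = Sum.elim b (-b))
    (happrox :
      Real.sqrt ((Sum.elim xh1 xh2 - Sum.elim x1 x2) ⬝ᵥ
          Atil.mulVec (Sum.elim xh1 xh2 - Sum.elim x1 x2)) ≤
        ε * Real.sqrt (Sum.elim x1 x2 ⬝ᵥ Atil.mulVec (Sum.elim x1 x2))) :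
    A.mulVec ((1 / 2 : ℝ) • (x1 - x2)) = b ∧
      Real.sqrt (((1 / 2 : ℝ) • (xh1 - xh2) - (1 / 2 : ℝ) • (x1 - x2)) ⬝ᵥ
          A.mulVec ((1 / 2 : ℝ) • (xh1 - xh2) - (1 / 2 : ℝ) • (x1 - x2))) ≤
        ε * Real.sqrt ((1 / 2 : ℝ) • (x1 - x2) ⬝ᵥ
          A.mulVec ((1 / 2 : ℝ) • (x1 - x2))) :=
  gremban_reduction_general A hsym Ap An D1 D2 hAp hAn hD1 hD2 Atil hAtil b x1 x2 xh1 xh2 ε hexact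
    happrox
end
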